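/- Let J(q,t) = E2(t) q² + E1(t) q a + E0(t) a² + E♯(t) where E2(t) = tanh(T-t), E1(t) = 2(1 - sech(T-t)), E0(t) = (T-t) - tanh(T-t), and E♯(t) = log cosh(T-t). Then with u = -(1/2) ∂_q J, the function J satisfies the HJB equation 0 = ∂_t J + q² + u² + (a + u) ∂_q J + (1/2) ∂_q² J for all q ∈ ℝ, t ∈ [0,T], together with J(q,T) = 0. -/

import Mathlib

/-!
Write `J q t = E₂ τ q² + E₁ τ q a + E₀ τ a² + E₃ τ` with `τ = T - t`. Since `u = -J_q / 2`, the
control terms collapse to `u² + u J_q = -u²`, and the HJB equation becomes a polynomial identity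
in `q` and `a`. Comparing coefficients turns it into the Riccati system
`E₂' = 1 - E₂²`, `E₁' = E₂ (2 - E₁)`, `E₀' = E₁ - E₁² / 4`, `E₃' = E₂`,
which `tanh`, `2 (1 - sech)`, `τ - tanh` and `log cosh` satisfy because `tanh² + sech² = 1`.
-/

open Real

theorem Real.tanh_sq_add_inv_cosh_sq (x : ℝ) : tanh x ^ 2 + (1 / cosh x) ^ 2 = 1 := by
  have hc := (cosh_pos x).ne'
  rw [tanh_eq_sinh_div_cosh]
  field_simp
  linarith [cosh_sq_sub_sinh_sq x]

theorem Real.hasDerivAt_tanh (x : ℝ) : HasDerivAt tanh (1 - tanh x ^ 2) x := by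
  have h := (hasDerivAt_sinh x).div (hasDerivAt_cosh x) (cosh_pos x).ne'
  rw [show tanh = fun y => sinh y / cosh y from funext tanh_eq_sinh_div_cosh]
  refine h.congr_deriv ?_
  have hc := (cosh_pos x).ne'
  field_simp

theorem Real.hasDerivAt_log_cosh (x : ℝ) : HasDerivAt (fun y => log (cosh y)) (tanh x) x := by
  simpa [tanh_eq_sinh_div_cosh] using (hasDerivAt_cosh x).log (cosh_pos x).ne'

theorem hasDerivAt_two_mul_one_sub_inv_cosh (x : ℝ) :
    HasDerivAt (fun y => 2 * (1 - 1 / cosh y)) (tanh x * (2 - 2 * (1 - 1 / cosh x))) x := by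
  have h := (((hasDerivAt_cosh x).inv (cosh_pos x).ne').const_sub 1).const_mul 2
  simp only [one_div]
  refine h.congr_deriv ?_
  rw [tanh_eq_sinh_div_cosh]
  ring

theorem hasDerivAt_sub_tanh (x : ℝ) :
    HasDerivAt (fun y => y - tanh y)
      (2 * (1 - 1 / cosh x) - (2 * (1 - 1 / cosh x)) ^ 2 / 4) x := by
  refine ((hasDerivAt_id x).sub (hasDerivAt_tanh x)).congr_deriv ?_
  linear_combination tanh_sq_add_inv_cosh_sq x

theorem hjb_of_riccati (T a : ℝ) {E₂ E₁ E₀ E₃ : ℝ → ℝ} (J u : ℝ → ℝ → ℝ)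
    (hJ : ∀ q t, J q t =
      E₂ (T - t) * q ^ 2 + E₁ (T - t) * q * a + E₀ (T - t) * a ^ 2 + E₃ (T - t))
    (hu : ∀ q t, u q t = -(1 / 2) * deriv (fun p => J p t) q) (q t : ℝ)
    (h₂ : HasDerivAt E₂ (1 - E₂ (T - t) ^ 2) (T - t))
    (h₁ : HasDerivAt E₁ (E₂ (T - t) * (2 - E₁ (T - t))) (T - t))
    (h₀ : HasDerivAt E₀ (E₁ (T - t) - E₁ (T - t) ^ 2 / 4) (T - t))
    (h₃ : HasDerivAt E₃ (E₂ (T - t)) (T - t)) :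
    0 = deriv (fun s => J q s) t + q ^ 2 + (u q t) ^ 2 +
      (a + u q t) * deriv (fun p => J p t) q +
      (1 / 2) * deriv (fun p => deriv (fun p' => J p' t) p) q := by
  set τ := T - t
  have hJq : ∀ p, HasDerivAt (fun p => J p t) (2 * E₂ τ * p + E₁ τ * a) p := by
    intro p
    simp only [hJ]
    have hquad := ((hasDerivAt_pow 2 p).const_mul (E₂ τ)).add
      (((hasDerivAt_id p).const_mul (E₁ τ)).mul_const a)
    refine ((hquad.add_const _).add_const _).congr_deriv ?_
    ring
  have hJqq : HasDerivAt (fun p => deriv (fun p' => J p' t) p) (2 * E₂ τ) q := by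
    simp only [fun p => (hJq p).deriv]
    simpa using ((hasDerivAt_id q).const_mul (2 * E₂ τ)).add_const (E₁ τ * a)
  have hJt : HasDerivAt (fun s => J q s)
      (-((1 - E₂ τ ^ 2) * q ^ 2 + E₂ τ * (2 - E₁ τ) * q * a +
        (E₁ τ - E₁ τ ^ 2 / 4) * a ^ 2 + E₂ τ)) t := by
    have hG := (((h₂.mul_const (q ^ 2)).add ((h₁.mul_const q).mul_const a)).add
      (h₀.mul_const (a ^ 2))).add h₃
    have hτ : HasDerivAt (fun s : ℝ => T - s) (-1) t := by
      simpa using (hasDerivAt_id t).const_sub T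
    simp only [hJ]
    refine (hG.comp t hτ).congr_deriv ?_
    ring
  rw [hJt.deriv, hJqq.deriv, hu, (hJq q).deriv]
  ring

theorem stmt_5_general (T a : ℝ) (J : ℝ → ℝ → ℝ) (u : ℝ → ℝ → ℝ)
    (hJ : ∀ q t, J q t =
      Real.tanh (T - t) * q ^ 2 + 2 * (1 - 1 / Real.cosh (T - t)) * q * a +
        ((T - t) - Real.tanh (T - t)) * a ^ 2 + Real.log (Real.cosh (T - t)))
    (hu : ∀ q t, u q t = -(1 / 2) * deriv (fun p => J p t) q) :
    (∀ q : ℝ, ∀ t ∈ Set.Icc (0 : ℝ) T,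
      0 = deriv (fun s => J q s) t + q ^ 2 + (u q t) ^ 2 +
        (a + u q t) * deriv (fun p => J p t) q +
        (1 / 2) * deriv (fun p => deriv (fun p' => J p' t) p) q) ∧
    (∀ q : ℝ, J q T = 0) :=
  ⟨fun q t _ => hjb_of_riccati T a J u hJ hu q t (hasDerivAt_tanh _)
      (hasDerivAt_two_mul_one_sub_inv_cosh _) (hasDerivAt_sub_tanh _) (hasDerivAt_log_cosh _),
    fun q => by simp [hJ]⟩

/-- The quadratic value function `J q t = E2 t * q² + E1 t * q * a + E0 t * a² + E♯ t`
satisfies the HJB equation `0 = ∂ₜ J + q² + u² + (a + u) ∂_q J + (1/2) ∂_q² J`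
with `u = -(1/2) ∂_q J`, together with `J q T = 0`. -/
theorem stmt_5 (T a : ℝ) (hT : 0 < T) (J : ℝ → ℝ → ℝ) (u : ℝ → ℝ → ℝ)
    (hJ : ∀ q t, J q t =
      Real.tanh (T - t) * q ^ 2 + 2 * (1 - 1 / Real.cosh (T - t)) * q * a +
        ((T - t) - Real.tanh (T - t)) * a ^ 2 + Real.log (Real.cosh (T - t)))
    (hu : ∀ q t, u q t = -(1 / 2) * deriv (fun p => J p t) q) :
    (∀ q : ℝ, ∀ t ∈ Set.Icc (0 : ℝ) T,
      0 = deriv (fun s => J q s) t + q ^ 2 + (u q t) ^ 2 +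
        (a + u q t) * deriv (fun p => J p t) q +
        (1 / 2) * deriv (fun p => deriv (fun p' => J p' t) p) q) ∧
    (∀ q : ℝ, J q T = 0) :=
  stmt_5_general T a J u hJ hu
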